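/- The map α ↦ g_α sending α ∈ (0,1) to the α-expectile of a fixed non-degenerate square-integrable random variable Y is strictly monotonically increasing. -/

import Mathlib

open MeasureTheory

/-- First-order condition characterizing the `α`-expectile `g` of a random variable `Y`:
`α·E[(Y - g)₊] = (1-α)·E[(g - Y)₊]`. -/
def IsExpectileFOC {Ω : Type*} [MeasurableSpace Ω] (μ : Measure Ω) (Y : Ω → ℝ)
    (α g : ℝ) : Prop :=
  α * ∫ ω, max (Y ω - g) 0 ∂μ = (1 - α) * ∫ ω, max (g - Y ω) 0 ∂μ

/-!
Write `P g = E[(Y - g)₊]` and `N g = E[(g - Y)₊]`. The first-order condition reads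
`α · (P g + N g) = N g`, and `P g + N g = E|Y - g| > 0` when `Y` is not a.s. constant, so `g` can
only be the `α`-expectile for `α = N g / (P g + N g)`. Since `N` is nondecreasing and `P`
nonincreasing in `g`, this level is monotone in `g`; hence `g₂ ≤ g₁` would force `α₂ ≤ α₁`.
-/

lemma div_add_le_div_add {a b c d : ℝ} (ha : 0 ≤ a) (hac : a ≤ c) (hd : 0 ≤ d) (hdb : d ≤ b) :
    a / (b + a) ≤ c / (d + c) := by
  rcases ha.eq_or_lt with rfl | ha
  · simp only [zero_div]
    exact div_nonneg (ha.trans hac) (by linarith)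
  rw [div_le_div_iff₀ (by linarith) (by linarith)]
  nlinarith [mul_le_mul hac hdb hd (ha.le.trans hac)]

/-- The level `α` at which `g` satisfies the expectile first-order condition. -/
noncomputable def expectileLevel {Ω : Type*} [MeasurableSpace Ω] (μ : Measure Ω) (Y : Ω → ℝ)
    (g : ℝ) : ℝ :=
  (∫ ω, max (g - Y ω) 0 ∂μ) / ((∫ ω, max (Y ω - g) 0 ∂μ) + ∫ ω, max (g - Y ω) 0 ∂μ)

section

variable {Ω : Type*} [MeasurableSpace Ω] {μ : Measure Ω} [IsFiniteMeasure μ] {Y : Ω → ℝ}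

lemma integrable_max_sub_const (hY : Integrable Y μ) (g : ℝ) :
    Integrable (fun ω => max (Y ω - g) 0) μ :=
  (hY.sub (integrable_const g)).sup (integrable_const 0)

lemma integrable_max_const_sub (hY : Integrable Y μ) (g : ℝ) :
    Integrable (fun ω => max (g - Y ω) 0) μ :=
  ((integrable_const g).sub hY).sup (integrable_const 0)

lemma integral_max_sub_add_integral_max_sub (hY : Integrable Y μ) (g : ℝ) :
    (∫ ω, max (Y ω - g) 0 ∂μ) + ∫ ω, max (g - Y ω) 0 ∂μ = ∫ ω, |Y ω - g| ∂μ := by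
  rw [← integral_add (integrable_max_sub_const hY g) (integrable_max_const_sub hY g)]
  congr 1 with ω
  rw [← max_zero_add_max_neg_zero_eq_abs_self, neg_sub]

lemma integral_abs_sub_pos (hY : Integrable Y μ) {g : ℝ} (hnc : ¬ ∀ᵐ ω ∂μ, Y ω = g) :
    0 < ∫ ω, |Y ω - g| ∂μ := by
  refine (integral_nonneg fun ω => abs_nonneg _).lt_of_ne fun h => hnc ?_
  have hint : Integrable (fun ω => |Y ω - g|) μ := (hY.sub (integrable_const g)).abs
  filter_upwards [(integral_eq_zero_iff_of_nonneg (fun ω => abs_nonneg _) hint).mp h.symm]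
    with ω hω
  simpa [sub_eq_zero] using hω

lemma monotone_expectileLevel (hY : Integrable Y μ) : Monotone (expectileLevel μ Y) := by
  intro g h hgh
  exact div_add_le_div_add (integral_nonneg fun ω => le_max_right _ _)
    (integral_mono (integrable_max_const_sub hY g) (integrable_max_const_sub hY h)
      fun ω => max_le_max (by linarith) le_rfl)
    (integral_nonneg fun ω => le_max_right _ _)
    (integral_mono (integrable_max_sub_const hY h) (integrable_max_sub_const hY g)
      fun ω => max_le_max (by linarith) le_rfl)

lemma IsExpectileFOC.eq_expectileLevel {α g : ℝ} (hY : Integrable Y μ)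
    (hnc : ¬ ∀ᵐ ω ∂μ, Y ω = g) (hfoc : IsExpectileFOC μ Y α g) :
    α = expectileLevel μ Y g := by
  have hpos := integral_abs_sub_pos hY hnc
  rw [← integral_max_sub_add_integral_max_sub hY g] at hpos
  rw [expectileLevel, eq_div_iff hpos.ne']
  unfold IsExpectileFOC at hfoc
  linarith

end

theorem stmt3_general {Ω : Type*} [MeasurableSpace Ω] (μ : Measure Ω) [IsProbabilityMeasure μ]
    (Y : Ω → ℝ) (hY : MemLp Y 2 μ)
    (hnc : ¬ ∃ c : ℝ, ∀ᵐ ω ∂μ, Y ω = c)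
    (α₁ α₂ : ℝ)
    (hlt : α₁ < α₂) (g₁ g₂ : ℝ)
    (h₁ : IsExpectileFOC μ Y α₁ g₁) (h₂ : IsExpectileFOC μ Y α₂ g₂) :
    g₁ < g₂ := by
  have hYi : Integrable Y μ := hY.integrable one_le_two
  by_contra! hle
  have hα₁ := h₁.eq_expectileLevel hYi fun h => hnc ⟨g₁, h⟩
  have hα₂ := h₂.eq_expectileLevel hYi fun h => hnc ⟨g₂, h⟩
  have := monotone_expectileLevel hYi hle
  linarith

/-- For a fixed non-degenerate square-integrable random variable `Y`, the map
`α ↦ g_α` sending `α ∈ (0,1)` to the `α`-expectile of `Y` is strictly increasing. -/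
theorem stmt3 {Ω : Type*} [MeasurableSpace Ω] (μ : Measure Ω) [IsProbabilityMeasure μ]
    (Y : Ω → ℝ) (hY : MemLp Y 2 μ)
    (hnc : ¬ ∃ c : ℝ, ∀ᵐ ω ∂μ, Y ω = c)
    (α₁ α₂ : ℝ) (hα₁ : α₁ ∈ Set.Ioo (0 : ℝ) 1) (hα₂ : α₂ ∈ Set.Ioo (0 : ℝ) 1)
    (hlt : α₁ < α₂) (g₁ g₂ : ℝ)
    (h₁ : IsExpectileFOC μ Y α₁ g₁) (h₂ : IsExpectileFOC μ Y α₂ g₂) :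
    g₁ < g₂ :=
  stmt3_general μ Y hY hnc α₁ α₂ hlt g₁ g₂ h₁ h₂
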